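/- Guarded normal form yields a universal form: if A_e, A₁,…,A_K are state formulas with A₁,…,A_K a full system of state formulas, A₁',…,A_K' are ITL formulas, and A ≡ (A_e ∧ Empty) ∨ ⋁_k (A_k ∧ ◯A_k') is valid, then A ≡ (Empty → A_e) ∧ ⋀_k ((A_k ∧ ¬Empty) → ◯A_k') is valid. -/
import Mathlib


/-- Formulas of propositional discrete-time Interval Temporal Logic (ITL):
`⊥ | p | A → A | ◯A | A;A | A*`. -/
inductive ITL (V : Type) : Type
  | bot : ITL V
  | var : V → ITL V
  | imp : ITL V → ITL V → ITL V
  | next : ITL V → ITL V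
  | chop : ITL V → ITL V → ITL V
  | star : ITL V → ITL V

namespace ITL

variable {V : Type}

/-- Satisfaction `σ,i,j ⊨ A` for models `σ : ℤ → Set V` and reference intervals `[i,j]`. -/
def Sat (σ : ℤ → Set V) : ℤ → ℤ → ITL V → Prop
  | _, _, bot => False
  | i, _, var p => p ∈ σ i
  | i, j, imp A B => Sat σ i j A → Sat σ i j B
  | i, j, next A => i < j ∧ Sat σ (i + 1) j A
  | i, j, chop A B => ∃ k, i ≤ k ∧ k ≤ j ∧ Sat σ i k A ∧ Sat σ k j B
  | i, j, star A => i = j ∨ ∃ (N : ℕ) (f : ℕ → ℤ), f 0 = i ∧ f N = j ∧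
      (∀ n < N, f n < f (n + 1)) ∧ ∀ n < N, Sat σ (f n) (f (n + 1)) A

def top : ITL V := imp bot bot
def neg (A : ITL V) : ITL V := imp A bot
def or' (A B : ITL V) : ITL V := imp (neg A) B
def and' (A B : ITL V) : ITL V := neg (imp A (neg B))
def iff' (A B : ITL V) : ITL V := and' (imp A B) (imp B A)
/-- `Empty`: a single state interval. -/
def empty : ITL V := neg (next top)
/-- `Skip`: a 2-state interval. -/
def skip : ITL V := next empty
/-- `◇A := ⊤;A`: `A` in some suffix subinterval. -/
def dia (A : ITL V) : ITL V := chop top A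
/-- `□A`: `A` in all suffix subintervals. -/
def box (A : ITL V) : ITL V := neg (dia (neg A))
/-- `Di A := A;⊤`: `A` in some prefix subinterval. -/
def di (A : ITL V) : ITL V := chop A top
/-- `Bi A`: `A` in all prefix subintervals. -/
def bi (A : ITL V) : ITL V := neg (di (neg A))

def bigOr : List (ITL V) → ITL V
  | [] => bot
  | A :: l => or' A (bigOr l)

def bigAnd : List (ITL V) → ITL V
  | [] => top
  | A :: l => and' A (bigAnd l)

/-- A formula is valid if it holds at every model and every reference interval. -/
def Valid (A : ITL V) : Prop := ∀ (σ : ℤ → Set V) (i j : ℤ), i ≤ j → Sat σ i j A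

end ITL

open ITL

lemma sat_imp {V : Type} (σ : ℤ → Set V) (i j : ℤ) (A B : ITL V) :
    Sat σ i j (ITL.imp A B) ↔ (Sat σ i j A → Sat σ i j B) := Iff.rfl

lemma sat_and' {V : Type} (σ : ℤ → Set V) (i j : ℤ) (A B : ITL V) :
    Sat σ i j (and' A B) ↔ Sat σ i j A ∧ Sat σ i j B := by
  unfold and' neg; rw [sat_imp, sat_imp, sat_imp]; simp [Sat]

lemma sat_or' {V : Type} (σ : ℤ → Set V) (i j : ℤ) (A B : ITL V) :
    Sat σ i j (or' A B) ↔ Sat σ i j A ∨ Sat σ i j B := by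
  unfold or' neg; rw [sat_imp, sat_imp]; simp [Sat]; tauto

lemma sat_neg {V : Type} (σ : ℤ → Set V) (i j : ℤ) (A : ITL V) :
    Sat σ i j (neg A) ↔ ¬ Sat σ i j A := by
  simp [neg, Sat]

lemma sat_empty {V : Type} (σ : ℤ → Set V) (i j : ℤ) :
    Sat σ i j empty ↔ ¬ i < j := by
  simp [empty, neg, next, top, Sat]

lemma sat_bigOr {V : Type} (σ : ℤ → Set V) (i j : ℤ) (l : List (ITL V)) :
    Sat σ i j (bigOr l) ↔ ∃ A ∈ l, Sat σ i j A := by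
  induction l with
  | nil => simp [bigOr, Sat]
  | cons a l ih => simp [bigOr, sat_or', ih]

lemma sat_bigAnd {V : Type} (σ : ℤ → Set V) (i j : ℤ) (l : List (ITL V)) :
    Sat σ i j (bigAnd l) ↔ ∀ A ∈ l, Sat σ i j A := by
  induction l with
  | nil => simp [bigAnd, top, Sat]
  | cons a l ih => simp [bigAnd, sat_and', ih]

/-- if `A₁,…,A_K` is a full system of state formulas, `A_e` is a state
formula, and `A ≡ (A_e ∧ Empty) ∨ ⋁_k (A_k ∧ ◯A_k')` is valid, then
`A ≡ (Empty → A_e) ∧ ⋀_k ((A_k ∧ ¬Empty) → ◯A_k')` is valid. -/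
theorem gnf_universal_form {V : Type} (K : ℕ) (A Ae : ITL V)
    (Ak : Fin K → ITL V) (Ak' : Fin K → ITL V)
    (hAe : ∀ (σ σ' : ℤ → Set V) (i j i' j' : ℤ), σ i = σ' i' →
      (Sat σ i j Ae ↔ Sat σ' i' j' Ae))
    (hstate : ∀ k : Fin K, ∀ (σ σ' : ℤ → Set V) (i j i' j' : ℤ), σ i = σ' i' →
      (Sat σ i j (Ak k) ↔ Sat σ' i' j' (Ak k)))
    (hfull : ∀ (σ : ℤ → Set V) (i j : ℤ), i ≤ j → ∃! k : Fin K, Sat σ i j (Ak k))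
    (hequiv : Valid (iff' A (or' (and' Ae empty)
      (bigOr (List.ofFn fun k : Fin K => and' (Ak k) (next (Ak' k))))))) :
    Valid (iff' A (and' (imp empty Ae)
      (bigAnd (List.ofFn fun k : Fin K =>
        imp (and' (Ak k) (neg empty)) (next (Ak' k)))))) := by
  intro σ i j hij
  have he := hequiv σ i j hij
  simp only [iff'] at he ⊢
  rw [sat_and', sat_imp, sat_imp] at he ⊢
  rw [sat_or', sat_and', sat_bigOr] at he
  rw [sat_and', sat_imp, sat_bigAnd]
  simp only [List.mem_ofFn] at he ⊢
  constructor
  · intro hA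
    have h := he.1 hA
    constructor
    · intro hE
      rcases h with ⟨hae, _⟩ | ⟨B, ⟨k, rfl⟩, hB⟩
      · exact hae
      · rw [sat_and'] at hB
        exact absurd hB.2.1 ((sat_empty σ i j).1 hE)
    · intro B hB
      obtain ⟨k, rfl⟩ := hB
      rw [sat_imp, sat_and', sat_neg]
      intro hSB
      rcases h with ⟨_, hE⟩ | ⟨B', ⟨k', rfl⟩, hB'⟩
      · exact absurd hE hSB.2
      · rw [sat_and'] at hB'
        obtain ⟨k0, hk0, huniq⟩ := hfull σ i j hij
        have hkk : k = k' := by rw [huniq k hSB.1, huniq k' hB'.1]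
        rw [hkk]; exact hB'.2
  · rintro ⟨hE, hall⟩
    apply he.2
    obtain ⟨k0, hk0, _⟩ := hfull σ i j hij
    rcases lt_or_eq_of_le hij with hlt | heq
    · right
      refine ⟨_, ⟨k0, rfl⟩, ?_⟩
      rw [sat_and']
      have hh := hall _ ⟨k0, rfl⟩
      rw [sat_imp, sat_and', sat_neg, sat_empty] at hh
      exact ⟨hk0, hh ⟨hk0, by simp [hlt]⟩⟩
    · left
      exact ⟨hE ((sat_empty σ i j).2 (by omega)), (sat_empty σ i j).2 (by omega)⟩
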